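/- Let A, A* be a tridiagonal pair on V with diameter d. Then V = U^{↑↑}_0 + U^{↑↑}_1 + ⋯ + U^{↑↑}_d is a direct sum, where U^{↑↑}_i = (V*_{d−i} + ⋯ + V*_d) ∩ (V_i + ⋯ + V_d) for 0 ≤ i ≤ d. -/

import Mathlib

noncomputable section

open Module

/-- The `i`-th eigenspace in an ordering `θ 0, …, θ d` of the eigenvalues of `A`,
with the convention that it is `⊥` for `i > d` (so `V_{d+1} = 0`). -/
def evSp {V : Type*} [AddCommGroup V] [Module ℂ V]
    (A : Module.End ℂ V) (θ : ℕ → ℂ) (d : ℕ) (i : ℕ) : Submodule ℂ V :=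
  if i ≤ d then A.eigenspace (θ i) else ⊥

/-- A tridiagonal pair `A, A*` on `V`: both maps are diagonalizable, there are orderings
`V_0, …, V_d` (with eigenvalues `θ 0, …, θ d`) of the eigenspaces of `A` and
`V*_0, …, V*_δ` (with eigenvalues `ψ 0, …, ψ δ`) of the eigenspaces of `A*`
satisfying the tridiagonal conditions (with `V_{-1} = 0`, `V_{d+1} = 0`,
`V*_{-1} = 0`, `V*_{δ+1} = 0`), and the pair is irreducible. -/
structure TDPair (V : Type*) [AddCommGroup V] [Module ℂ V] where
  A : Module.End ℂ V
  Astar : Module.End ℂ V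
  d : ℕ
  δ : ℕ
  θ : ℕ → ℂ
  ψ : ℕ → ℂ
  θ_inj : ∀ i ≤ d, ∀ j ≤ d, θ i = θ j → i = j
  ψ_inj : ∀ i ≤ δ, ∀ j ≤ δ, ψ i = ψ j → i = j
  eigA_ne : ∀ i ≤ d, A.eigenspace (θ i) ≠ ⊥
  eigAstar_ne : ∀ i ≤ δ, Astar.eigenspace (ψ i) ≠ ⊥
  eigA_all : ∀ μ : ℂ, A.eigenspace μ ≠ ⊥ → ∃ i ≤ d, μ = θ i
  eigAstar_all : ∀ μ : ℂ, Astar.eigenspace μ ≠ ⊥ → ∃ i ≤ δ, μ = ψ i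
  diagA : ⨆ i ∈ Finset.range (d + 1), A.eigenspace (θ i) = ⊤
  diagAstar : ⨆ i ∈ Finset.range (δ + 1), Astar.eigenspace (ψ i) = ⊤
  triA : ∀ i ≤ d, Submodule.map Astar (evSp A θ d i) ≤
      evSp A θ d (i - 1) ⊔ evSp A θ d i ⊔ evSp A θ d (i + 1)
  triAstar : ∀ i ≤ δ, Submodule.map A (evSp Astar ψ δ i) ≤
      evSp Astar ψ δ (i - 1) ⊔ evSp Astar ψ δ i ⊔ evSp Astar ψ δ (i + 1)
  irred : ∀ W : Submodule ℂ V, Submodule.map A W ≤ W → Submodule.map Astar W ≤ W →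
      W = ⊥ ∨ W = ⊤

/-- `U^{↓↓}_i = (V*_0 + ⋯ + V*_i) ∩ (V_0 + ⋯ + V_{d-i})`. -/
def Udd {V : Type*} [AddCommGroup V] [Module ℂ V] (P : TDPair V) (i : ℕ) : Submodule ℂ V :=
  (⨆ k ∈ Finset.range (i + 1), P.Astar.eigenspace (P.ψ k)) ⊓
  (⨆ k ∈ Finset.range (P.d - i + 1), P.A.eigenspace (P.θ k))

/-- `U^{↑↓}_i = (V*_{d-i} + ⋯ + V*_d) ∩ (V_0 + ⋯ + V_{d-i})`. -/
def Uud {V : Type*} [AddCommGroup V] [Module ℂ V] (P : TDPair V) (i : ℕ) : Submodule ℂ V :=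
  (⨆ k ∈ Finset.Icc (P.d - i) P.d, P.Astar.eigenspace (P.ψ k)) ⊓
  (⨆ k ∈ Finset.range (P.d - i + 1), P.A.eigenspace (P.θ k))

/-- `U^{↓↑}_i = (V*_0 + ⋯ + V*_i) ∩ (V_i + ⋯ + V_d)`. -/
def Udu {V : Type*} [AddCommGroup V] [Module ℂ V] (P : TDPair V) (i : ℕ) : Submodule ℂ V :=
  (⨆ k ∈ Finset.range (i + 1), P.Astar.eigenspace (P.ψ k)) ⊓
  (⨆ k ∈ Finset.Icc i P.d, P.A.eigenspace (P.θ k))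

/-- `U^{↑↑}_i = (V*_{d-i} + ⋯ + V*_d) ∩ (V_i + ⋯ + V_d)`. -/
def Uuu {V : Type*} [AddCommGroup V] [Module ℂ V] (P : TDPair V) (i : ℕ) : Submodule ℂ V :=
  (⨆ k ∈ Finset.Icc (P.d - i) P.d, P.Astar.eigenspace (P.ψ k)) ⊓
  (⨆ k ∈ Finset.Icc i P.d, P.A.eigenspace (P.θ k))

/-!
Write `F n = V*_{d+1-n} + ⋯ + V*_d` (`starSum`) and `G m = V_m + ⋯ + V_d` (`sumFrom`), so that
`U^{↑↑}_i = F (i+1) ∩ G i`. The tridiagonal conditions say that `A - θ_m` maps `F n ∩ G m` into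
`F (n+1) ∩ G (m+1)` and `A* - ψ_{d+1-n}` maps it into `F (n-1) ∩ G (m-1)`. Hence for every offset
`c` the sum of the `F (m+c) ∩ G m` is invariant under `A` and `A*`, so it is `0` or `V` by
irreducibility. For `c = 1` it contains `V_d ≠ 0`, so the `U_i` span `V`; for `c = 0` it lies in
`G 1 ≠ V`, so every `F m ∩ G m` vanishes, and in the modular lattice of subspaces this makes the
`U_i = F (i+1) ∩ G i` independent.
-/

theorem iSupIndep_inf_succ_of_monotone_of_antitone {α : Type*} [CompleteLattice α]
    [IsModularLattice α] {F G : ℕ → α} (hF : Monotone F) (hG : Antitone G)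
    (hFG : ∀ n, Disjoint (F n) (G n)) :
    iSupIndep fun n => F (n + 1) ⊓ G n := by
  intro i
  have hothers : (⨆ (j) (_ : j ≠ i), F (j + 1) ⊓ G j) ≤ F i ⊔ G (i + 1) := by
    refine iSup₂_le fun j hj => ?_
    rcases lt_or_gt_of_ne hj with hji | hij
    · exact inf_le_left.trans ((hF hji).trans le_sup_left)
    · exact inf_le_right.trans ((hG hij).trans le_sup_right)
  have hmodular : (F i ⊔ G (i + 1)) ⊓ F (i + 1) = F i := by
    rw [sup_inf_assoc_of_le _ (hF i.le_succ), inf_comm, (hFG (i + 1)).eq_bot, sup_bot_eq]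
  rw [disjoint_iff_inf_le]
  calc F (i + 1) ⊓ G i ⊓ ⨆ (j) (_ : j ≠ i), F (j + 1) ⊓ G j
      ≤ G i ⊓ ((F i ⊔ G (i + 1)) ⊓ F (i + 1)) := by
        rw [inf_comm (F i ⊔ G (i + 1)), inf_comm (F (i + 1)), inf_assoc]
        exact inf_le_inf_left _ (inf_le_inf_left _ hothers)
    _ = ⊥ := by rw [hmodular, inf_comm, (hFG i).eq_bot]

theorem Module.End.sub_smul_one_apply_of_mem_eigenspace {R M : Type*} [CommRing R]
    [AddCommGroup M] [Module R M] {T : Module.End R M} {μ : R} (c : R) {x : M}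
    (hx : x ∈ T.eigenspace μ) : (T - c • 1) x = (μ - c) • x := by
  rw [Module.End.mem_eigenspace_iff] at hx
  simp [hx, sub_smul]

theorem Submodule.map_sub_smul_one_le_iff {R M : Type*} [CommRing R] [AddCommGroup M]
    [Module R M] {T : Module.End R M} {S W : Submodule R M} (c : R) (hSW : S ≤ W) :
    S.map (T - c • 1) ≤ W ↔ S.map T ≤ W := by
  rw [Submodule.map_le_iff_le_comap, Submodule.map_le_iff_le_comap]
  refine forall₂_congr fun x hx => ?_
  rw [Submodule.mem_comap, Submodule.mem_comap, LinearMap.sub_apply, LinearMap.smul_apply,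
    Module.End.one_apply]
  exact W.sub_mem_iff_left (W.smul_mem c (hSW hx))

theorem evSp_of_le {V : Type*} [AddCommGroup V] [Module ℂ V] {A : Module.End ℂ V}
    {θ : ℕ → ℂ} {d i : ℕ} (h : i ≤ d) : evSp A θ d i = A.eigenspace (θ i) :=
  if_pos h

theorem evSp_le {V : Type*} [AddCommGroup V] [Module ℂ V] {A : Module.End ℂ V}
    {θ : ℕ → ℂ} {d i : ℕ} {W : Submodule ℂ V} (h : i ≤ d → A.eigenspace (θ i) ≤ W) :
    evSp A θ d i ≤ W := by
  unfold evSp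
  split_ifs with hi
  exacts [h hi, bot_le]

namespace TDPair

variable {V : Type*} [AddCommGroup V] [Module ℂ V] (P : TDPair V)

-- Indexed by the number of summands, so that `starSum 0 = ⊥`.
def starSum (n : ℕ) : Submodule ℂ V :=
  ⨆ k ∈ Finset.Icc (P.d + 1 - n) P.d, P.Astar.eigenspace (P.ψ k)

def sumFrom (i : ℕ) : Submodule ℂ V :=
  ⨆ k ∈ Finset.Icc i P.d, P.A.eigenspace (P.θ k)

def cell (a b : ℕ) : Submodule ℂ V :=
  P.starSum a ⊓ P.sumFrom b

def diagSum (c : ℕ) : Submodule ℂ V :=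
  ⨆ b, P.cell (b + c) b

theorem starSum_mono : Monotone P.starSum := fun _ _ h =>
  biSup_mono fun k hk => by simp only [Finset.mem_Icc] at hk ⊢; omega

theorem sumFrom_anti : Antitone P.sumFrom := fun _ _ h =>
  biSup_mono fun k hk => by simp only [Finset.mem_Icc] at hk ⊢; omega

theorem starSum_zero : P.starSum 0 = ⊥ := by
  simp [starSum]

theorem starSum_eq_top (hdd : P.δ = P.d) {n : ℕ} (hn : P.d + 1 ≤ n) : P.starSum n = ⊤ := by
  have hIcc : Finset.Icc (P.d + 1 - n) P.d = Finset.range (P.δ + 1) := by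
    ext k; simp only [Finset.mem_Icc, Finset.mem_range]; omega
  rw [starSum, hIcc, P.diagAstar]

theorem sumFrom_eq_bot {i : ℕ} (hi : P.d < i) : P.sumFrom i = ⊥ := by
  simp [sumFrom, Finset.Icc_eq_empty_of_lt hi]

theorem eigenspace_le_starSum {n k : ℕ} (hnk : P.d + 1 - n ≤ k) (hk : k ≤ P.d) :
    P.Astar.eigenspace (P.ψ k) ≤ P.starSum n :=
  le_biSup (fun k => P.Astar.eigenspace (P.ψ k)) (Finset.mem_Icc.2 ⟨hnk, hk⟩)

theorem eigenspace_le_sumFrom {i k : ℕ} (hik : i ≤ k) (hk : k ≤ P.d) :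
    P.A.eigenspace (P.θ k) ≤ P.sumFrom i :=
  le_biSup (fun k => P.A.eigenspace (P.θ k)) (Finset.mem_Icc.2 ⟨hik, hk⟩)

theorem disjoint_eigenspace_zero_sumFrom_one :
    Disjoint (P.A.eigenspace (P.θ 0)) (P.sumFrom 1) := by
  refine (P.A.eigenspaces_iSupIndep (P.θ 0)).mono_right (iSup₂_le fun k hk => ?_)
  rw [Finset.mem_Icc] at hk
  refine le_iSup₂_of_le (f := fun μ (_ : μ ≠ P.θ 0) => P.A.eigenspace μ) (P.θ k)
    (fun h => ?_) le_rfl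
  have := P.θ_inj k hk.2 0 (Nat.zero_le _) h
  omega

theorem map_sub_smul_sumFrom_le (i : ℕ) :
    (P.sumFrom i).map (P.A - P.θ i • 1) ≤ P.sumFrom (i + 1) := by
  refine Submodule.map_le_iff_le_comap.2 (iSup₂_le fun k hk => fun x hx => ?_)
  rw [Finset.mem_Icc] at hk
  rw [Submodule.mem_comap, Module.End.sub_smul_one_apply_of_mem_eigenspace _ hx]
  rcases hk.1.eq_or_lt with rfl | hik
  · rw [sub_self, zero_smul]
    exact zero_mem _
  · exact P.eigenspace_le_sumFrom hik hk.2 (Submodule.smul_mem _ _ hx)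

theorem map_Astar_sumFrom_le (i : ℕ) :
    (P.sumFrom i).map P.Astar ≤ P.sumFrom (i - 1) := by
  refine Submodule.map_le_iff_le_comap.2 (iSup₂_le fun k hk => ?_)
  rw [Finset.mem_Icc] at hk
  rw [← Submodule.map_le_iff_le_comap, ← evSp_of_le hk.2]
  refine (P.triA k hk.2).trans (sup_le (sup_le ?_ ?_) ?_) <;>
    exact evSp_le fun h => P.eigenspace_le_sumFrom (by omega) h

theorem map_A_starSum_le (hdd : P.δ = P.d) (n : ℕ) :
    (P.starSum n).map P.A ≤ P.starSum (n + 1) := by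
  refine Submodule.map_le_iff_le_comap.2 (iSup₂_le fun k hk => ?_)
  rw [Finset.mem_Icc] at hk
  have hkδ : k ≤ P.δ := hdd ▸ hk.2
  rw [← Submodule.map_le_iff_le_comap, ← evSp_of_le hkδ]
  refine (P.triAstar k hkδ).trans (sup_le (sup_le ?_ ?_) ?_) <;>
    exact evSp_le fun h => P.eigenspace_le_starSum (by omega) (by omega)

theorem map_Astar_sub_smul_starSum_le (n : ℕ) :
    (P.starSum n).map (P.Astar - P.ψ (P.d + 1 - n) • 1) ≤ P.starSum (n - 1) := by
  refine Submodule.map_le_iff_le_comap.2 (iSup₂_le fun k hk => fun x hx => ?_)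
  rw [Finset.mem_Icc] at hk
  rw [Submodule.mem_comap, Module.End.sub_smul_one_apply_of_mem_eigenspace _ hx]
  rcases hk.1.eq_or_lt with rfl | hnk
  · rw [sub_self, zero_smul]
    exact zero_mem _
  · exact P.eigenspace_le_starSum (by omega) hk.2 (Submodule.smul_mem _ _ hx)

theorem cell_mono {a a' b b' : ℕ} (ha : a ≤ a') (hb : b' ≤ b) :
    P.cell a b ≤ P.cell a' b' :=
  inf_le_inf (P.starSum_mono ha) (P.sumFrom_anti hb)

theorem map_A_sub_smul_cell_le (hdd : P.δ = P.d) (a b : ℕ) :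
    (P.cell a b).map (P.A - P.θ b • 1) ≤ P.cell (a + 1) (b + 1) :=
  (Submodule.map_inf_le _).trans <| inf_le_inf
    ((Submodule.map_sub_smul_one_le_iff _ (P.starSum_mono a.le_succ)).2
      (P.map_A_starSum_le hdd a))
    (P.map_sub_smul_sumFrom_le b)

theorem map_Astar_sub_smul_cell_le (a b : ℕ) :
    (P.cell a b).map (P.Astar - P.ψ (P.d + 1 - a) • 1) ≤ P.cell (a - 1) (b - 1) :=
  (Submodule.map_inf_le _).trans <| inf_le_inf
    (P.map_Astar_sub_smul_starSum_le a)
    ((Submodule.map_sub_smul_one_le_iff _ (P.sumFrom_anti (b.sub_le 1))).2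
      (P.map_Astar_sumFrom_le b))

theorem map_A_diagSum_le (hdd : P.δ = P.d) (c : ℕ) :
    (P.diagSum c).map P.A ≤ P.diagSum c := by
  rw [diagSum, Submodule.map_iSup]
  refine iSup_le fun b => ?_
  rw [← Submodule.map_sub_smul_one_le_iff (P.θ b) (le_iSup (fun b => P.cell (b + c) b) b)]
  refine (P.map_A_sub_smul_cell_le hdd _ _).trans ?_
  rw [Nat.add_right_comm]
  exact le_iSup (fun b => P.cell (b + c) b) (b + 1)

theorem map_Astar_diagSum_le (c : ℕ) :
    (P.diagSum c).map P.Astar ≤ P.diagSum c := by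
  rw [diagSum, Submodule.map_iSup]
  refine iSup_le fun b => ?_
  rw [← Submodule.map_sub_smul_one_le_iff (P.ψ (P.d + 1 - (b + c)))
    (le_iSup (fun b => P.cell (b + c) b) b)]
  refine (P.map_Astar_sub_smul_cell_le _ _).trans ?_
  exact (P.cell_mono (by omega) le_rfl).trans (le_iSup (fun b => P.cell (b + c) b) (b - 1))

theorem diagSum_eq_bot_or_eq_top (hdd : P.δ = P.d) (c : ℕ) :
    P.diagSum c = ⊥ ∨ P.diagSum c = ⊤ :=
  P.irred _ (P.map_A_diagSum_le hdd c) (P.map_Astar_diagSum_le c)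

theorem diagSum_one_eq_top (hdd : P.δ = P.d) : P.diagSum 1 = ⊤ := by
  refine (P.diagSum_eq_bot_or_eq_top hdd 1).resolve_left fun h => P.eigA_ne P.d le_rfl ?_
  rw [← le_bot_iff, ← h]
  calc P.A.eigenspace (P.θ P.d) ≤ P.cell (P.d + 1) P.d := by
        rw [cell, P.starSum_eq_top hdd le_rfl, top_inf_eq]
        exact P.eigenspace_le_sumFrom le_rfl le_rfl
    _ ≤ P.diagSum 1 := le_iSup (fun b => P.cell (b + 1) b) P.d

theorem diagSum_zero_eq_bot (hdd : P.δ = P.d) : P.diagSum 0 = ⊥ := by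
  refine (P.diagSum_eq_bot_or_eq_top hdd 0).resolve_right fun h => P.eigA_ne 0 (Nat.zero_le _) ?_
  have hle : P.diagSum 0 ≤ P.sumFrom 1 := iSup_le fun b => by
    rcases b with _ | b
    · simp [cell, starSum_zero]
    · exact inf_le_right.trans (P.sumFrom_anti (by omega))
  rw [h, top_le_iff] at hle
  simpa [hle] using P.disjoint_eigenspace_zero_sumFrom_one

theorem cell_self_eq_bot (hdd : P.δ = P.d) (n : ℕ) : P.cell n n = ⊥ :=
  le_bot_iff.1 ((le_iSup (fun b => P.cell (b + 0) b) n).trans (P.diagSum_zero_eq_bot hdd).le)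

theorem Uuu_eq_cell (i : ℕ) : Uuu P i = P.cell (i + 1) i := by
  simp only [Uuu, cell, starSum, sumFrom, Nat.add_sub_add_right]

theorem iSup_fin_cell_eq_diagSum_one :
    ⨆ i : Fin (P.d + 1), P.cell (i + 1) i = P.diagSum 1 := by
  refine le_antisymm (iSup_le fun i => le_iSup (fun b => P.cell (b + 1) b) i) (iSup_le fun b => ?_)
  by_cases hb : b ≤ P.d
  · exact le_iSup (fun i : Fin (P.d + 1) => P.cell (i + 1) i) ⟨b, Nat.lt_succ_of_le hb⟩
  · simp [cell, P.sumFrom_eq_bot (not_le.1 hb)]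

end TDPair

theorem tdpair_split_uu_general {V : Type*} [AddCommGroup V] [Module ℂ V]
    (P : TDPair V)
    (hdd : P.δ = P.d) :
    iSupIndep (fun i : Fin (P.d + 1) => Uuu P i) ∧
      (⨆ i : Fin (P.d + 1), Uuu P i) = ⊤ := by
  simp only [P.Uuu_eq_cell]
  refine ⟨?_, by rw [P.iSup_fin_cell_eq_diagSum_one, P.diagSum_one_eq_top hdd]⟩
  have hindep : iSupIndep fun n => P.cell (n + 1) n :=
    iSupIndep_inf_succ_of_monotone_of_antitone P.starSum_mono P.sumFrom_anti
      fun n => disjoint_iff.2 (P.cell_self_eq_bot hdd n)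
  exact hindep.comp Fin.val_injective

/-- The `(↓,↓)/(↑,↓)/(↓,↑)/(↑,↑)`-split decomposition:
`V = U_0 + U_1 + ⋯ + U_d` is a direct sum. -/
theorem tdpair_split_uu {V : Type*} [AddCommGroup V] [Module ℂ V]
    [FiniteDimensional ℂ V] (hV : 0 < Module.finrank ℂ V) (P : TDPair V)
    (hdd : P.δ = P.d) :
    iSupIndep (fun i : Fin (P.d + 1) => Uuu P i) ∧
      (⨆ i : Fin (P.d + 1), Uuu P i) = ⊤ :=
  tdpair_split_uu_general P hdd

end
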